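/- Let Θ and X be finite nonempty sets, u : X × Θ → ℝ, and let x : Θ → Δ(X) be a cyclically monotone social choice function. Let q, π ∈ Δ(Θ). Define the cost c(θ,θ') = −ū(x(θ'),θ). Then there exists a kernel r : Θ → Δ(Θ) with Σ_θ π(θ)·r(θ) = q such that the coupling γ(θ,θ') = π(θ)·r(θ)(θ') is a c-optimal coupling of π and q, 1 − Σ_θ π(θ)·r(θ)(θ) ≤ (|Θ| − 1)·‖q − π‖, and consequently Σ_θ π(θ)·‖x(r(θ)) − x(θ)‖ ≤ (|Θ| − 1)·‖q − π‖, where x is extended linearly to Δ(Θ). -/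
import Mathlib


open Finset

/-- `p` is a probability vector on the finite set `Z`. -/
def IsProbVec {Z : Type*} [Fintype Z] (p : Z → ℝ) : Prop :=
  (∀ z, 0 ≤ p z) ∧ ∑ z, p z = 1

/-- Total variation distance `‖p − q‖ = (1/2)·Σ_z |p z − q z|`. -/
noncomputable def tv {Z : Type*} [Fintype Z] (p q : Z → ℝ) : ℝ :=
  (∑ z, |p z - q z|) / 2

/-- `γ` is a coupling of `p` and `q`. -/
def IsCoupling {X Y : Type*} [Fintype X] [Fintype Y]
    (γ : X → Y → ℝ) (p : X → ℝ) (q : Y → ℝ) : Prop :=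
  (∀ x y, 0 ≤ γ x y) ∧ (∀ x, ∑ y, γ x y = p x) ∧ (∀ y, ∑ x, γ x y = q y)

/-- Total transport cost of `γ` under the cost function `c`. -/
noncomputable def transportCost {X Y : Type*} [Fintype X] [Fintype Y]
    (c : X → Y → ℝ) (γ : X → Y → ℝ) : ℝ :=
  ∑ x, ∑ y, c x y * γ x y

/-- `γ` is a `c`-optimal coupling of `p` and `q`. -/
def IsOptimalCoupling {X Y : Type*} [Fintype X] [Fintype Y]
    (c : X → Y → ℝ) (γ : X → Y → ℝ) (p : X → ℝ) (q : Y → ℝ) : Prop :=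
  IsCoupling γ p q ∧
    ∀ γ' : X → Y → ℝ, IsCoupling γ' p q → transportCost c γ ≤ transportCost c γ'

/-- Lifted utility: `ū(μ,θ) = Σ_a μ(a)·u(a,θ)` for a lottery `μ ∈ Δ(X)`. -/
noncomputable def ubar {Θ X : Type*} [Fintype X]
    (u : X × Θ → ℝ) (μ : X → ℝ) (θ : Θ) : ℝ :=
  ∑ a, μ a * u (a, θ)

/-- Linear extension of the social choice function `x : Θ → Δ(X)` to `Δ(Θ)`. -/
noncomputable def liftSCF {Θ X : Type*} [Fintype Θ]
    (x : Θ → X → ℝ) (r : Θ → ℝ) : X → ℝ :=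
  fun a => ∑ θ', r θ' * x θ' a

/-- `x : Θ → Δ(X)` is cyclically monotone for the utility `u`. -/
def CyclMonoSCF {Θ X : Type*} [Fintype X] (u : X × Θ → ℝ) (x : Θ → X → ℝ) : Prop :=
  ∀ J : ℕ, ∀ θs : Fin (J + 2) → Θ, Function.Injective θs →
    ∑ j, ubar u (x (θs (j + 1))) (θs j) ≤ ∑ j, ubar u (x (θs j)) (θs j)

private lemma max_half (x : ℝ) : max x 0 = (x + |x|)/2 := by
  rcases le_total 0 x with h | h
  · rw [abs_of_nonneg h, max_eq_left h]; ring
  · rw [abs_of_nonpos h, max_eq_right h]; ring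

private lemma sum_posPart_eq_tv {Θ : Type*} [Fintype Θ] (q π : Θ → ℝ)
    (hq : ∑ θ, q θ = 1) (hπ : ∑ θ, π θ = 1) :
    ∑ θ, max (π θ - q θ) 0 = tv q π := by
  have h0 : ∑ θ, (π θ - q θ) = 0 := by rw [Finset.sum_sub_distrib, hπ, hq]; ring
  calc ∑ θ, max (π θ - q θ) 0 = ∑ θ, ((π θ - q θ) + |π θ - q θ|)/2 := by
        simp_rw [max_half]
    _ = ((∑ θ, (π θ - q θ)) + ∑ θ, |π θ - q θ|)/2 := by
        rw [← Finset.sum_div, Finset.sum_add_distrib]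
    _ = (∑ θ, |q θ - π θ|)/2 := by rw [h0]; simp [abs_sub_comm]
    _ = tv q π := rfl

private lemma isClosed_couplings {Θ : Type*} [Fintype Θ] (p q : Θ → ℝ) :
    IsClosed {γ : Θ → Θ → ℝ | IsCoupling γ p q} := by
  have : {γ : Θ → Θ → ℝ | IsCoupling γ p q} =
      (⋂ (a : Θ), ⋂ (b : Θ), {γ : Θ → Θ → ℝ | 0 ≤ γ a b}) ∩
      ((⋂ (a : Θ), {γ : Θ → Θ → ℝ | ∑ b, γ a b = p a}) ∩
       (⋂ (b : Θ), {γ : Θ → Θ → ℝ | ∑ a, γ a b = q b})) := by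
    ext γ
    simp only [Set.mem_setOf_eq, Set.mem_inter_iff, Set.mem_iInter, IsCoupling]
  rw [this]
  refine IsClosed.inter ?_ (IsClosed.inter ?_ ?_)
  · exact isClosed_iInter fun a => isClosed_iInter fun b =>
      isClosed_le continuous_const ((continuous_apply b).comp (continuous_apply a))
  · exact isClosed_iInter fun a => isClosed_eq
      (continuous_finset_sum _ fun b _ => (continuous_apply b).comp (continuous_apply a))
      continuous_const
  · exact isClosed_iInter fun b => isClosed_eq
      (continuous_finset_sum _ fun a _ => (continuous_apply b).comp (continuous_apply a))
      continuous_const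

private lemma exists_opt_maxdiag {Θ : Type*} [Fintype Θ] (c : Θ → Θ → ℝ) (p q : Θ → ℝ)
    (hp : IsProbVec p) (hq : IsProbVec q) :
    ∃ γ : Θ → Θ → ℝ, IsOptimalCoupling c γ p q ∧
      ∀ γ', IsOptimalCoupling c γ' p q → ∑ θ, γ' θ θ ≤ ∑ θ, γ θ θ := by
  classical
  set S := {γ : Θ → Θ → ℝ | IsCoupling γ p q} with hS
  have hSne : S.Nonempty := by
    refine ⟨fun a b => p a * q b, ⟨fun a b => mul_nonneg (hp.1 a) (hq.1 b), ?_, ?_⟩⟩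
    · intro a; rw [← Finset.mul_sum, hq.2, mul_one]
    · intro b; rw [← Finset.sum_mul, hp.2, one_mul]
  have hsub : S ⊆ Set.univ.pi (fun _ : Θ => Set.univ.pi fun _ : Θ => Set.Icc (0:ℝ) 1) := by
    intro γ hγ
    intro a _
    intro b _
    refine ⟨hγ.1 a b, ?_⟩
    have h1 : γ a b ≤ ∑ y, γ a y :=
      Finset.single_le_sum (fun y _ => hγ.1 a y) (mem_univ b)
    have h2 : p a ≤ 1 := by
      rw [← hp.2]
      exact Finset.single_le_sum (fun z _ => hp.1 z) (mem_univ a)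
    rw [hγ.2.1 a] at h1
    linarith
  have hKc : IsCompact (Set.univ.pi (fun _ : Θ => Set.univ.pi fun _ : Θ => Set.Icc (0:ℝ) 1)) :=
    isCompact_univ_pi fun _ => isCompact_univ_pi fun _ => isCompact_Icc
  have hSc : IsCompact S := hKc.of_isClosed_subset (isClosed_couplings p q) hsub
  have hcostc : Continuous (transportCost c) := by
    unfold transportCost
    exact continuous_finset_sum _ fun a _ => continuous_finset_sum _ fun b _ =>
      continuous_const.mul ((continuous_apply b).comp (continuous_apply a))
  obtain ⟨γ₀, hγ₀S, hγ₀min⟩ := hSc.exists_isMinOn hSne hcostc.continuousOn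
  set T := S ∩ {γ : Θ → Θ → ℝ | transportCost c γ = transportCost c γ₀} with hT
  have hTc : IsCompact T := hSc.inter_right (isClosed_eq hcostc continuous_const)
  have hTne : T.Nonempty := ⟨γ₀, hγ₀S, rfl⟩
  have hdiagc : Continuous (fun γ : Θ → Θ → ℝ => ∑ θ, γ θ θ) :=
    continuous_finset_sum _ fun a _ => (continuous_apply a).comp (continuous_apply a)
  obtain ⟨γ, hγT, hγmax⟩ := hTc.exists_isMaxOn hTne hdiagc.continuousOn
  refine ⟨γ, ⟨hγT.1, ?_⟩, ?_⟩
  · intro γ' hγ'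
    have := hγ₀min hγ'
    calc transportCost c γ = transportCost c γ₀ := hγT.2
      _ ≤ transportCost c γ' := this
  · intro γ' hγ'
    have hγ'T : γ' ∈ T := by
      refine ⟨hγ'.1, le_antisymm (hγ'.2 γ₀ hγ₀S) ?_⟩
      exact hγ₀min hγ'.1
    exact hγmax hγ'T

private lemma fin_succ_ne {k : ℕ} (j : Fin (k+2)) : j + 1 ≠ j := by
  intro h
  have hv := congrArg Fin.val h
  rw [Fin.val_add, Fin.val_one] at hv
  have hj := j.isLt
  rcases Nat.lt_or_ge (j.val + 1) (k+2) with h' | h'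
  · rw [Nat.mod_eq_of_lt h'] at hv; omega
  · have hje : j.val = k + 1 := by omega
    rw [hje] at hv
    have : (k + 1 + 1) % (k + 2) = 0 := by
      have : k + 1 + 1 = k + 2 := rfl
      rw [this, Nat.mod_self]
    omega

private lemma no_cycle {Θ X : Type*} [Fintype Θ] [Fintype X]
    (u : X × Θ → ℝ) (x : Θ → X → ℝ) (hcm : CyclMonoSCF u x)
    (p q : Θ → ℝ) (γ : Θ → Θ → ℝ)
    (hopt : IsOptimalCoupling (fun θ θ' => -ubar u (x θ') θ) γ p q)
    (hmax : ∀ γ', IsOptimalCoupling (fun θ θ' => -ubar u (x θ') θ) γ' p q →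
      ∑ θ, γ' θ θ ≤ ∑ θ, γ θ θ)
    (k : ℕ) (θs : Fin (k+2) → Θ) (hinj : Function.Injective θs) :
    ¬ ∀ j, 0 < γ (θs j) (θs (j+1)) := by
  classical
  intro hpos
  set c : Θ → Θ → ℝ := fun θ θ' => -ubar u (x θ') θ with hc
  have hne : ∀ j : Fin (k+2), θs j ≠ θs (j+1) := by
    intro j h
    exact fin_succ_ne j (hinj h).symm
  set ε : ℝ := univ.inf' univ_nonempty (fun j : Fin (k+2) => γ (θs j) (θs (j+1))) with hε
  have hεpos : 0 < ε := by
    rw [hε, Finset.lt_inf'_iff]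
    exact fun j _ => hpos j
  have hεle : ∀ j : Fin (k+2), ε ≤ γ (θs j) (θs (j+1)) := by
    intro j; exact Finset.inf'_le _ (mem_univ j)
  set γ'' : Θ → Θ → ℝ := fun θ θ' => γ θ θ' + ε *
    ∑ j : Fin (k+2), ((if θ = θs j ∧ θ' = θs j then (1:ℝ) else 0)
      - (if θ = θs j ∧ θ' = θs (j+1) then (1:ℝ) else 0)) with hγ''
  -- inner sum computations
  have inner1 : ∀ (θ : Θ) (j : Fin (k+2)),
      ∑ θ', (if θ = θs j ∧ θ' = θs j then (1:ℝ) else 0) = if θ = θs j then 1 else 0 := by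
    intro θ j; by_cases h : θ = θs j <;> simp [h]
  have inner2 : ∀ (θ : Θ) (j : Fin (k+2)),
      ∑ θ', (if θ = θs j ∧ θ' = θs (j+1) then (1:ℝ) else 0) = if θ = θs j then 1 else 0 := by
    intro θ j; by_cases h : θ = θs j <;> simp [h]
  have inner1' : ∀ (θ' : Θ) (j : Fin (k+2)),
      ∑ θ, (if θ = θs j ∧ θ' = θs j then (1:ℝ) else 0) = if θ' = θs j then 1 else 0 := by
    intro θ' j; by_cases h : θ' = θs j <;> simp [h]
  have inner2' : ∀ (θ' : Θ) (j : Fin (k+2)),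
      ∑ θ, (if θ = θs j ∧ θ' = θs (j+1) then (1:ℝ) else 0) = if θ' = θs (j+1) then 1 else 0 := by
    intro θ' j; by_cases h : θ' = θs (j+1) <;> simp [h]
  -- coupling
  have hcoup : IsCoupling γ'' p q := by
    refine ⟨?_, ?_, ?_⟩
    · -- nonneg
      intro θ θ'
      by_cases hj : ∃ j : Fin (k+2), θ = θs j ∧ θ' = θs (j+1)
      · obtain ⟨j0, hθ0, hθ'0⟩ := hj
        have hs2 : ∑ j : Fin (k+2), (if θ = θs j ∧ θ' = θs (j+1) then (1:ℝ) else 0) = 1 := by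
          rw [Finset.sum_eq_single j0]
          · simp [hθ0, hθ'0]
          · intro j _ hjne
            have hnot : ¬ (θ = θs j ∧ θ' = θs (j+1)) := by
              rintro ⟨h1, _⟩
              exact hjne (hinj (hθ0.symm.trans h1)).symm
            simp [hnot]
          · intro h; exact absurd (mem_univ j0) h
        have hs1 : (0:ℝ) ≤ ∑ j : Fin (k+2), (if θ = θs j ∧ θ' = θs j then (1:ℝ) else 0) :=
          Finset.sum_nonneg fun j _ => by positivity
        have hγθ : ε ≤ γ θ θ' := hθ0 ▸ hθ'0 ▸ hεle j0
        have heq : γ'' θ θ' = γ θ θ' + ε * ((∑ j : Fin (k+2), (if θ = θs j ∧ θ' = θs j then (1:ℝ) else 0)) - 1) := by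
          simp only [hγ'']
          rw [Finset.sum_sub_distrib, hs2]
        rw [heq]
        nlinarith
      · push_neg at hj
        have hs2 : ∑ j : Fin (k+2), (if θ = θs j ∧ θ' = θs (j+1) then (1:ℝ) else 0) = 0 := by
          apply Finset.sum_eq_zero
          intro j _
          have hnot : ¬ (θ = θs j ∧ θ' = θs (j+1)) := by
            rintro ⟨h1, h2⟩; exact (hj j h1) h2
          simp [hnot]
        have hs1 : (0:ℝ) ≤ ∑ j : Fin (k+2), (if θ = θs j ∧ θ' = θs j then (1:ℝ) else 0) :=
          Finset.sum_nonneg fun j _ => by positivity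
        have heq : γ'' θ θ' = γ θ θ' + ε * ∑ j : Fin (k+2), (if θ = θs j ∧ θ' = θs j then (1:ℝ) else 0) := by
          simp only [hγ'']
          rw [Finset.sum_sub_distrib, hs2]; ring
        rw [heq]
        have := hopt.1.1 θ θ'
        nlinarith
    · -- rows
      intro θ
      have heq : ∑ θ', γ'' θ θ' = (∑ θ', γ θ θ') + ε * ∑ θ', ∑ j : Fin (k+2),
          ((if θ = θs j ∧ θ' = θs j then (1:ℝ) else 0) - (if θ = θs j ∧ θ' = θs (j+1) then (1:ℝ) else 0)) := by
        simp only [hγ'']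
        rw [Finset.sum_add_distrib, ← Finset.mul_sum]
      rw [heq, Finset.sum_comm]
      have hz : ∑ j : Fin (k+2), ∑ θ', ((if θ = θs j ∧ θ' = θs j then (1:ℝ) else 0)
          - (if θ = θs j ∧ θ' = θs (j+1) then (1:ℝ) else 0)) = 0 := by
        apply Finset.sum_eq_zero
        intro j _
        rw [Finset.sum_sub_distrib, inner1, inner2, sub_self]
      rw [hz, mul_zero, add_zero, hopt.1.2.1 θ]
    · -- cols
      intro θ'
      have heq : ∑ θ, γ'' θ θ' = (∑ θ, γ θ θ') + ε * ∑ θ, ∑ j : Fin (k+2),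
          ((if θ = θs j ∧ θ' = θs j then (1:ℝ) else 0) - (if θ = θs j ∧ θ' = θs (j+1) then (1:ℝ) else 0)) := by
        simp only [hγ'']
        rw [Finset.sum_add_distrib, ← Finset.mul_sum]
      rw [heq, Finset.sum_comm]
      have hz : ∑ j : Fin (k+2), ∑ θ, ((if θ = θs j ∧ θ' = θs j then (1:ℝ) else 0)
          - (if θ = θs j ∧ θ' = θs (j+1) then (1:ℝ) else 0)) = 0 := by
        have h2 : ∑ j : Fin (k+2), (if θ' = θs (j+1) then (1:ℝ) else 0)
            = ∑ j : Fin (k+2), (if θ' = θs j then (1:ℝ) else 0) :=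
          Fintype.sum_equiv (Equiv.addRight (1 : Fin (k+2)))
            (fun j => if θ' = θs (j+1) then (1:ℝ) else 0)
            (fun j => if θ' = θs j then (1:ℝ) else 0) (fun j => rfl)
        calc ∑ j : Fin (k+2), ∑ θ, ((if θ = θs j ∧ θ' = θs j then (1:ℝ) else 0)
              - (if θ = θs j ∧ θ' = θs (j+1) then (1:ℝ) else 0))
            = ∑ j : Fin (k+2), ((if θ' = θs j then (1:ℝ) else 0) - (if θ' = θs (j+1) then (1:ℝ) else 0)) := by
              apply Finset.sum_congr rfl
              intro j _
              rw [Finset.sum_sub_distrib, inner1', inner2']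
          _ = 0 := by rw [Finset.sum_sub_distrib, h2, sub_self]
      rw [hz, mul_zero, add_zero, hopt.1.2.2 θ']
  -- helper : double sum of pointed indicator
  have key1 : ∀ (a b : Θ), ∑ θ, ∑ θ', (if θ = a ∧ θ' = b then c θ θ' else 0) = c a b := by
    intro a b
    rw [Finset.sum_eq_single a]
    · rw [Finset.sum_eq_single b]
      · simp
      · intro y _ hy; simp [hy]
      · intro h; exact absurd (mem_univ b) h
    · intro θ _ hθ; apply Finset.sum_eq_zero; intro θ' _; simp [hθ]
    · intro h; exact absurd (mem_univ a) h
  -- cost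
  have hcost : transportCost c γ'' = transportCost c γ
      + ε * ∑ j : Fin (k+2), (c (θs j) (θs j) - c (θs j) (θs (j+1))) := by
    unfold transportCost
    have expand : ∀ θ θ', c θ θ' * γ'' θ θ' = c θ θ' * γ θ θ'
        + ε * ∑ j : Fin (k + 2), ((if θ = θs j ∧ θ' = θs j then c θ θ' else 0)
          - (if θ = θs j ∧ θ' = θs (j+1) then c θ θ' else 0)) := by
      intro θ θ'
      simp only [hγ'']
      rw [mul_add]
      congr 1
      rw [← mul_assoc, mul_comm (c θ θ') ε, mul_assoc, Finset.mul_sum]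
      congr 1
      apply Finset.sum_congr rfl
      intro j _
      rw [mul_sub, mul_ite, mul_one, mul_zero, mul_ite, mul_one, mul_zero]
    have hsum2 : ∑ θ, ∑ θ', ∑ j : Fin (k+2),
        ((if θ = θs j ∧ θ' = θs j then c θ θ' else 0)
          - (if θ = θs j ∧ θ' = θs (j+1) then c θ θ' else 0))
        = ∑ j : Fin (k+2), (c (θs j) (θs j) - c (θs j) (θs (j+1))) := by
      calc ∑ θ, ∑ θ', ∑ j : Fin (k+2), ((if θ = θs j ∧ θ' = θs j then c θ θ' else 0)
            - (if θ = θs j ∧ θ' = θs (j+1) then c θ θ' else 0))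
          = ∑ θ, ∑ j : Fin (k+2), ∑ θ', ((if θ = θs j ∧ θ' = θs j then c θ θ' else 0)
            - (if θ = θs j ∧ θ' = θs (j+1) then c θ θ' else 0)) := by
            exact Finset.sum_congr rfl fun θ _ => Finset.sum_comm
        _ = ∑ j : Fin (k+2), ∑ θ, ∑ θ', ((if θ = θs j ∧ θ' = θs j then c θ θ' else 0)
            - (if θ = θs j ∧ θ' = θs (j+1) then c θ θ' else 0)) := Finset.sum_comm
        _ = ∑ j : Fin (k+2), (c (θs j) (θs j) - c (θs j) (θs (j+1))) := by
            apply Finset.sum_congr rfl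
            intro j _
            have : ∀ θ : Θ, ∑ θ', ((if θ = θs j ∧ θ' = θs j then c θ θ' else 0)
                - (if θ = θs j ∧ θ' = θs (j+1) then c θ θ' else 0))
                = (∑ θ', (if θ = θs j ∧ θ' = θs j then c θ θ' else 0))
                  - ∑ θ', (if θ = θs j ∧ θ' = θs (j+1) then c θ θ' else 0) := by
              intro θ; rw [Finset.sum_sub_distrib]
            simp_rw [this]
            rw [Finset.sum_sub_distrib, key1, key1]
    simp_rw [expand]
    simp_rw [Finset.sum_add_distrib]
    congr 1
    simp_rw [← Finset.mul_sum]
    rw [hsum2]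
  -- diag
  have hdiag : ∑ θ, γ'' θ θ = (∑ θ, γ θ θ) + ε * (k+2) := by
    have heq : ∀ θ, γ'' θ θ = γ θ θ + ε * ∑ j : Fin (k+2),
        ((if θ = θs j then (1:ℝ) else 0) - (if θ = θs j ∧ θ = θs (j+1) then (1:ℝ) else 0)) := by
      intro θ
      simp only [hγ'']
      congr 2
      apply Finset.sum_congr rfl
      intro j _
      congr 1
      simp [and_self]
    have hzero : ∀ θ (j : Fin (k+2)), (if θ = θs j ∧ θ = θs (j+1) then (1:ℝ) else 0) = 0 := by
      intro θ j
      have : ¬ (θ = θs j ∧ θ = θs (j+1)) := by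
        rintro ⟨h1, h2⟩; exact hne j (h1 ▸ h2 ▸ rfl)
      simp [this]
    simp_rw [heq, hzero, sub_zero]
    rw [Finset.sum_add_distrib, ← Finset.mul_sum]
    congr 2
    rw [Finset.sum_comm]
    have : ∀ j : Fin (k+2), ∑ θ, (if θ = θs j then (1:ℝ) else 0) = 1 := by
      intro j; simp
    simp_rw [this]
    simp
  -- conclude
  have hoptγ'' : IsOptimalCoupling c γ'' p q := by
    refine ⟨hcoup, fun γ' hγ' => ?_⟩
    have h1 : transportCost c γ'' ≤ transportCost c γ := by
      rw [hcost]
      have hCM : ∑ j : Fin (k+2), (c (θs j) (θs j) - c (θs j) (θs (j+1))) ≤ 0 := by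
        have := hcm k θs hinj
        rw [Finset.sum_sub_distrib]
        simp only [hc]
        simp only [Finset.sum_neg_distrib]
        linarith [this]
      nlinarith
    exact le_trans h1 (hopt.2 γ' hγ')
  have := hmax γ'' hoptγ''
  rw [hdiag] at this
  nlinarith [hεpos]

private lemma exists_topo_order {Θ : Type*} [Fintype Θ] [Nonempty Θ] (R : Θ → Θ → Prop)
    (hirr : ∀ a, ¬ R a a)
    (hnc : ∀ (k : ℕ) (θs : Fin (k+2) → Θ), Function.Injective θs →
      ¬ ∀ j, R (θs j) (θs (j+1))) :
    ∃ e : Fin (Fintype.card Θ) ≃ Θ, ∀ i j, R (e i) (e j) → i < j := by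
  classical
  set n := Fintype.card Θ with hn
  have hn1 : 1 ≤ n := Fintype.card_pos
  -- longest path predicate
  set P : Θ → ℕ → Prop := fun θ m => ∃ g : ℕ → Θ,
    (∀ i j, i ≤ m → j ≤ m → g i = g j → i = j) ∧ g m = θ ∧ ∀ i, i < m → R (g i) (g (i+1))
    with hP
  have hP0 : ∀ θ, P θ 0 :=
    fun θ => ⟨fun _ => θ, fun i j hi hj _ => by omega, rfl, fun i hi => by omega⟩
  have hPbound : ∀ θ m, P θ m → m + 1 ≤ n := by
    intro θ m ⟨g, hg, _, _⟩
    have hinj : Function.Injective (fun i : Fin (m+1) => g i.val) := by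
      intro i j hij
      exact Fin.ext (hg i.val j.val (by omega) (by omega) hij)
    simpa using Fintype.card_le_of_injective _ hinj
  set f : Θ → ℕ := fun θ => Nat.findGreatest (P θ) n with hf
  have hfP : ∀ θ, P θ (f θ) := fun θ =>
    Nat.findGreatest_spec (Nat.zero_le n) (hP0 θ)
  have hstep : ∀ a b, R a b → f a < f b := by
    intro a b hab
    obtain ⟨g, hginj, hglast, hgedge⟩ := hfP a
    set m := f a with hm
    by_cases hb : ∃ i, i ≤ m ∧ g i = b
    · exfalso
      obtain ⟨i, him, hgi⟩ := hb
      have hilt : i < m := by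
        rcases eq_or_lt_of_le him with h | h
        · exfalso
          apply hirr b
          have : g i = a := by rw [h, hglast]
          rw [← hgi, this] at hab ⊢
          exact hab
        · exact h
      set k := m - i - 1 with hk
      have hk2 : i + (k + 1) = m := by omega
      refine hnc k (fun j => g (i + j.val)) ?_ ?_
      · intro j1 j2 h12
        have h1 := j1.isLt
        have h2 := j2.isLt
        exact Fin.ext (by
          have := hginj (i + j1.val) (i + j2.val) (by omega) (by omega) h12
          omega)
      · intro j
        by_cases hj : j.val = k + 1
        · have hv : ((j + 1 : Fin (k+2))).val = 0 := by
            rw [Fin.val_add, Fin.val_one, hj]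
            simp [Nat.mod_self]
          show R (g (i + j.val)) (g (i + ((j + 1 : Fin (k+2))).val))
          rw [hj, hv]
          have e1 : i + (k + 1) = m := hk2
          rw [e1, hglast, Nat.add_zero, hgi]
          exact hab
        · have hjlt : j.val < k + 1 := by have := j.isLt; omega
          have hv : ((j + 1 : Fin (k+2))).val = j.val + 1 := by
            rw [Fin.val_add, Fin.val_one]
            exact Nat.mod_eq_of_lt (by omega)
          show R (g (i + j.val)) (g (i + ((j + 1 : Fin (k+2))).val))
          rw [hv]
          have e1 : i + (j.val + 1) = (i + j.val) + 1 := by omega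
          rw [e1]
          exact hgedge (i + j.val) (by omega)
    · push_neg at hb
      have hPb : P b (m+1) := by
        refine ⟨fun i => if i = m+1 then b else g i, ?_, by simp, ?_⟩
        · intro i j hi hj hij
          simp only [] at hij
          by_cases h1 : i = m+1 <;> by_cases h2 : j = m+1
          · omega
          · rw [if_pos h1, if_neg h2] at hij
            exact absurd hij.symm (hb j (by omega))
          · rw [if_neg h1, if_pos h2] at hij
            exact absurd hij (hb i (by omega))
          · rw [if_neg h1, if_neg h2] at hij
            exact hginj i j (by omega) (by omega) hij
        · intro i hi
          simp only []
          by_cases h1 : i = m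
          · subst h1
            rw [if_neg (by omega : ¬ (m = m + 1)), if_pos rfl, hglast]
            exact hab
          · rw [if_neg (by omega : ¬ (i = m + 1)), if_neg (by omega : ¬ (i + 1 = m + 1))]
            exact hgedge i (by omega)
      have hble : m + 1 + 1 ≤ n := hPbound b (m+1) hPb
      have h2 : m + 1 ≤ f b := Nat.le_findGreatest (show m+1 ≤ n by omega) hPb
      omega
  -- rank construction
  set emb : Θ → ℕ := fun θ => ((Fintype.equivFin Θ) θ).val with hemb
  have hembn : ∀ θ, emb θ < n := fun θ => ((Fintype.equivFin Θ) θ).isLt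
  have hembinj : Function.Injective emb := by
    intro a b h
    exact (Fintype.equivFin Θ).injective (Fin.ext h)
  set w : Θ → ℕ := fun θ => f θ * n + emb θ with hw
  have hwmono : ∀ a b, f a < f b → w a < w b := by
    intro a b h
    have h1 : (f a + 1) * n = f a * n + n := by ring
    have h2 : (f a + 1) * n ≤ f b * n := Nat.mul_le_mul_right n (by omega)
    have := hembn a
    simp only [hw]
    omega
  have hwinj : Function.Injective w := by
    intro a b h
    rcases lt_trichotomy (f a) (f b) with h' | h' | h'
    · exact absurd h (Nat.ne_of_lt (hwmono a b h'))
    · apply hembinj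
      simp only [hw, h'] at h
      omega
    · exact absurd h.symm (Nat.ne_of_lt (hwmono b a h'))
  set ρ : Θ → ℕ := fun θ => (univ.filter fun θ' => w θ' < w θ).card with hρ
  have hρmono : ∀ a b, w a < w b → ρ a < ρ b := by
    intro a b h
    apply Finset.card_lt_card
    constructor
    · intro θ' hθ'
      simp only [mem_filter, mem_univ, true_and] at hθ' ⊢
      omega
    · intro hsub
      have : a ∈ univ.filter fun θ' => w θ' < w b := by
        simp only [mem_filter, mem_univ, true_and]; exact h
      have := hsub this
      simp only [mem_filter, mem_univ, true_and] at this
      omega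
  have hρlt : ∀ θ, ρ θ < n := by
    intro θ
    have hsub : (univ.filter fun θ' => w θ' < w θ) ⊆ univ.erase θ := by
      intro θ' hθ'
      simp only [mem_filter, mem_univ, true_and] at hθ'
      refine mem_erase.mpr ⟨?_, mem_univ θ'⟩
      intro h; rw [h] at hθ'; omega
    have h3 := Finset.card_le_card hsub
    rw [Finset.card_erase_of_mem (mem_univ θ), Finset.card_univ] at h3
    have h2 : ρ θ = (univ.filter fun θ' => w θ' < w θ).card := rfl
    have hc1 : 1 ≤ Fintype.card Θ := Fintype.card_pos
    have hn' : n = Fintype.card Θ := hn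
    omega
  set E : Θ → Fin n := fun θ => ⟨ρ θ, hρlt θ⟩ with hE
  have hEinj : Function.Injective E := by
    intro a b h
    have hρab : ρ a = ρ b := congrArg Fin.val h
    by_contra hne
    rcases lt_trichotomy (w a) (w b) with h' | h' | h'
    · have := hρmono a b h'; omega
    · exact hne (hwinj h')
    · have := hρmono b a h'; omega
  have hEbij : Function.Bijective E := by
    rw [Fintype.bijective_iff_injective_and_card]
    exact ⟨hEinj, by simp [hn]⟩
  refine ⟨(Equiv.ofBijective E hEbij).symm, ?_⟩
  intro i j hR
  have hEi : E ((Equiv.ofBijective E hEbij).symm i) = i := (Equiv.ofBijective E hEbij).apply_symm_apply i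
  have hEj : E ((Equiv.ofBijective E hEbij).symm j) = j := (Equiv.ofBijective E hEbij).apply_symm_apply j
  have hiv : ρ ((Equiv.ofBijective E hEbij).symm i) = i.val := congrArg Fin.val hEi
  have hjv : ρ ((Equiv.ofBijective E hEbij).symm j) = j.val := congrArg Fin.val hEj
  have h1 : f ((Equiv.ofBijective E hEbij).symm i) < f ((Equiv.ofBijective E hEbij).symm j) :=
    hstep _ _ hR
  have h2 := hρmono _ _ (hwmono _ _ h1)
  rw [hiv, hjv] at h2
  exact h2

private lemma offdiag_bound {Θ : Type*} [Fintype Θ] [Nonempty Θ]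
    (γ : Θ → Θ → ℝ) (p q : Θ → ℝ)
    (hc : IsCoupling γ p q) (hq1 : ∑ θ, q θ = 1) (hp1 : ∑ θ, p θ = 1)
    (n : ℕ) (hn : n = Fintype.card Θ)
    (e : Fin n ≃ Θ)
    (hfwd : ∀ i j : Fin n, e i ≠ e j → 0 < γ (e i) (e j) → i < j) :
    1 - ∑ θ, γ θ θ ≤ ((n : ℝ) - 1) * tv q p := by
  classical
  have hn1 : 1 ≤ n := by rw [hn]; exact Fintype.card_pos
  set F : Fin n → Fin n → ℝ := fun i j => if i = j then 0 else γ (e i) (e j) with hF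
  have hFnn : ∀ i j, 0 ≤ F i j := by
    intro i j
    simp only [hF]
    split
    · exact le_refl 0
    · exact hc.1 _ _
  have hF0 : ∀ i j : Fin n, j ≤ i → F i j = 0 := by
    intro i j hji
    rcases eq_or_lt_of_le hji with h | h
    · simp only [hF]; rw [if_pos h.symm]
    · have hij : i ≠ j := by
        intro hh; rw [hh] at h; exact lt_irrefl _ h
      simp only [hF]
      rw [if_neg hij]
      by_contra hne0
      have hpos : 0 < γ (e i) (e j) := lt_of_le_of_ne (hc.1 _ _) (Ne.symm hne0)
      have := hfwd i j (fun hh => hij (e.injective hh)) hpos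
      exact absurd this (not_lt.mpr hji)
  have hrow : ∀ i, ∑ j, F i j = p (e i) - γ (e i) (e i) := by
    intro i
    have h1 : ∑ j, γ (e i) (e j) = p (e i) := by
      rw [Equiv.sum_comp e (fun θ' => γ (e i) θ')]; exact hc.2.1 (e i)
    have h2 : ∀ j, F i j = γ (e i) (e j) - (if i = j then γ (e i) (e j) else 0) := by
      intro j; simp only [hF]; split <;> simp
    simp_rw [h2]
    rw [Finset.sum_sub_distrib, h1]
    congr 1
    rw [Finset.sum_ite_eq univ i (fun j => γ (e i) (e j))]
    simp
  have hcol : ∀ j, ∑ i, F i j = q (e j) - γ (e j) (e j) := by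
    intro j
    have h1 : ∑ i, γ (e i) (e j) = q (e j) := by
      rw [Equiv.sum_comp e (fun θ => γ θ (e j))]; exact hc.2.2 (e j)
    have h2 : ∀ i, F i j = γ (e i) (e j) - (if i = j then γ (e i) (e j) else 0) := by
      intro i; simp only [hF]; split <;> simp
    simp_rw [h2]
    rw [Finset.sum_sub_distrib, h1]
    congr 1
    rw [Finset.sum_ite_eq' univ j (fun i => γ (e i) (e j))]
    simp
  have htot : ∑ i, ∑ j, F i j = 1 - ∑ θ, γ θ θ := by
    simp_rw [hrow]
    rw [Finset.sum_sub_distrib, Equiv.sum_comp e p, hp1,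
      Equiv.sum_comp e (fun θ => γ θ θ)]
  -- cuts
  have hcut : ∀ k : ℕ,
      ∑ i ∈ univ.filter (fun i : Fin n => i.val ≤ k),
        ∑ j ∈ univ.filter (fun j : Fin n => ¬ j.val ≤ k), F i j
      = ∑ i ∈ univ.filter (fun i : Fin n => i.val ≤ k), (p (e i) - q (e i)) := by
    intro k
    have hpq : ∀ i, p (e i) - q (e i) = (∑ j, F i j) - ∑ j, F j i := by
      intro i; rw [hrow, hcol]; ring
    have h1 : ∀ (G : Fin n → Fin n → ℝ) (i : Fin n), ∑ j, G i j
        = ∑ j ∈ univ.filter (fun j : Fin n => j.val ≤ k), G i j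
          + ∑ j ∈ univ.filter (fun j : Fin n => ¬ j.val ≤ k), G i j :=
      fun G i => (Finset.sum_filter_add_sum_filter_not univ _ _).symm
    have h3 : ∑ i ∈ univ.filter (fun i : Fin n => i.val ≤ k),
        ∑ j ∈ univ.filter (fun j : Fin n => j.val ≤ k), F i j
        = ∑ i ∈ univ.filter (fun i : Fin n => i.val ≤ k),
          ∑ j ∈ univ.filter (fun j : Fin n => j.val ≤ k), F j i := Finset.sum_comm
    have h4 : ∑ i ∈ univ.filter (fun i : Fin n => i.val ≤ k),
        ∑ j ∈ univ.filter (fun j : Fin n => ¬ j.val ≤ k), F j i = 0 := by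
      apply Finset.sum_eq_zero
      intro i hi
      apply Finset.sum_eq_zero
      intro j hj
      simp only [mem_filter, mem_univ, true_and] at hi hj
      exact hF0 j i (by omega)
    have e1 : ∑ i ∈ univ.filter (fun i : Fin n => i.val ≤ k), ∑ j, F i j
        = ∑ i ∈ univ.filter (fun i : Fin n => i.val ≤ k),
            ∑ j ∈ univ.filter (fun j : Fin n => j.val ≤ k), F i j
          + ∑ i ∈ univ.filter (fun i : Fin n => i.val ≤ k),
            ∑ j ∈ univ.filter (fun j : Fin n => ¬ j.val ≤ k), F i j := by
      rw [← Finset.sum_add_distrib]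
      exact Finset.sum_congr rfl fun i _ => h1 F i
    have e2 : ∑ i ∈ univ.filter (fun i : Fin n => i.val ≤ k), ∑ j, F j i
        = ∑ i ∈ univ.filter (fun i : Fin n => i.val ≤ k),
            ∑ j ∈ univ.filter (fun j : Fin n => j.val ≤ k), F j i
          + ∑ i ∈ univ.filter (fun i : Fin n => i.val ≤ k),
            ∑ j ∈ univ.filter (fun j : Fin n => ¬ j.val ≤ k), F j i := by
      rw [← Finset.sum_add_distrib]
      exact Finset.sum_congr rfl fun i _ => h1 (fun a b => F b a) i
    have hAfull : ∑ i ∈ univ.filter (fun i : Fin n => i.val ≤ k),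
        ((∑ j, F i j) - ∑ j, F j i)
        = ∑ i ∈ univ.filter (fun i : Fin n => i.val ≤ k),
            ∑ j ∈ univ.filter (fun j : Fin n => ¬ j.val ≤ k), F i j := by
      rw [Finset.sum_sub_distrib, e1, e2, h3, h4]
      ring
    rw [← hAfull]
    exact Finset.sum_congr rfl fun i _ => (hpq i).symm
  have hSk_le : ∀ k : ℕ,
      ∑ i ∈ univ.filter (fun i : Fin n => i.val ≤ k), (p (e i) - q (e i)) ≤ tv q p := by
    intro k
    calc ∑ i ∈ univ.filter (fun i : Fin n => i.val ≤ k), (p (e i) - q (e i))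
        ≤ ∑ i ∈ univ.filter (fun i : Fin n => i.val ≤ k), max (p (e i) - q (e i)) 0 :=
          Finset.sum_le_sum fun i _ => le_max_left _ _
      _ ≤ ∑ i : Fin n, max (p (e i) - q (e i)) 0 :=
          Finset.sum_le_sum_of_subset_of_nonneg (Finset.subset_univ _)
            (fun i _ _ => le_max_right _ _)
      _ = ∑ θ, max (p θ - q θ) 0 := Equiv.sum_comp e (fun θ => max (p θ - q θ) 0)
      _ = tv q p := sum_posPart_eq_tv q p hq1 hp1
  -- per-pair bound
  have hpair : ∀ i j : Fin n, F i j
      ≤ ∑ k ∈ Finset.range (n-1), (if i.val ≤ k ∧ k < j.val then F i j else 0) := by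
    intro i j
    have hnn2 : ∀ k : ℕ, 0 ≤ (if i.val ≤ k ∧ k < j.val then F i j else 0) := by
      intro k
      split
      · exact hFnn i j
      · exact le_refl 0
    by_cases hij : i < j
    · have hvij : i.val < j.val := hij
      have hjlt := j.isLt
      have hmem : i.val ∈ Finset.range (n-1) := Finset.mem_range.mpr (by omega)
      have hterm : (if i.val ≤ i.val ∧ i.val < j.val then F i j else 0) = F i j := by
        rw [if_pos ⟨le_refl _, hvij⟩]
      calc F i j = (if i.val ≤ i.val ∧ i.val < j.val then F i j else 0) := hterm.symm
        _ ≤ ∑ k ∈ Finset.range (n-1), (if i.val ≤ k ∧ k < j.val then F i j else 0) :=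
            Finset.single_le_sum (fun k _ => hnn2 k) hmem
    · have hz : F i j = 0 := hF0 i j (le_of_not_gt hij)
      exact le_trans (le_of_eq hz) (Finset.sum_nonneg fun k _ => hnn2 k)
  have hbridge : ∀ k : ℕ,
      ∑ i, ∑ j, (if i.val ≤ k ∧ k < j.val then F i j else 0)
      = ∑ i ∈ univ.filter (fun i : Fin n => i.val ≤ k),
          ∑ j ∈ univ.filter (fun j : Fin n => ¬ j.val ≤ k), F i j := by
    intro k
    rw [Finset.sum_filter]
    apply Finset.sum_congr rfl
    intro i _
    by_cases hi : i.val ≤ k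
    · rw [if_pos hi, Finset.sum_filter]
      apply Finset.sum_congr rfl
      intro j _
      by_cases hj : k < j.val
      · rw [if_pos ⟨hi, hj⟩, if_pos (by omega)]
      · rw [if_neg (fun h => hj h.2), if_neg (by omega)]
    · rw [if_neg hi]
      apply Finset.sum_eq_zero
      intro j _
      rw [if_neg (fun h => hi h.1)]
  -- combine
  have step1 : 1 - ∑ θ, γ θ θ
      ≤ ∑ k ∈ Finset.range (n-1),
          ∑ i ∈ univ.filter (fun i : Fin n => i.val ≤ k),
            ∑ j ∈ univ.filter (fun j : Fin n => ¬ j.val ≤ k), F i j := by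
    rw [← htot]
    calc ∑ i, ∑ j, F i j
        ≤ ∑ i, ∑ j, ∑ k ∈ Finset.range (n-1), (if i.val ≤ k ∧ k < j.val then F i j else 0) :=
          Finset.sum_le_sum fun i _ => Finset.sum_le_sum fun j _ => hpair i j
      _ = ∑ i, ∑ k ∈ Finset.range (n-1), ∑ j, (if i.val ≤ k ∧ k < j.val then F i j else 0) :=
          Finset.sum_congr rfl fun i _ => Finset.sum_comm
      _ = ∑ k ∈ Finset.range (n-1), ∑ i, ∑ j, (if i.val ≤ k ∧ k < j.val then F i j else 0) :=
          Finset.sum_comm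
      _ = ∑ k ∈ Finset.range (n-1),
          ∑ i ∈ univ.filter (fun i : Fin n => i.val ≤ k),
            ∑ j ∈ univ.filter (fun j : Fin n => ¬ j.val ≤ k), F i j :=
          Finset.sum_congr rfl fun k _ => hbridge k
  have step2 : ∑ k ∈ Finset.range (n-1),
      ∑ i ∈ univ.filter (fun i : Fin n => i.val ≤ k),
        ∑ j ∈ univ.filter (fun j : Fin n => ¬ j.val ≤ k), F i j
      ≤ ∑ _k ∈ Finset.range (n-1), tv q p := by
    apply Finset.sum_le_sum
    intro k _
    rw [hcut k]
    exact hSk_le k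
  have step3 : ∑ _k ∈ Finset.range (n-1), tv q p = ((n - 1 : ℕ) : ℝ) * tv q p := by
    rw [Finset.sum_const, Finset.card_range, nsmul_eq_mul]
  have hcast : ((n - 1 : ℕ) : ℝ) = (n : ℝ) - 1 := by
    rw [Nat.cast_sub hn1, Nat.cast_one]
  calc 1 - ∑ θ, γ θ θ ≤ ∑ _k ∈ Finset.range (n-1), tv q p := le_trans step1 step2
    _ = ((n - 1 : ℕ) : ℝ) * tv q p := step3
    _ = ((n : ℝ) - 1) * tv q p := by rw [hcast]

private lemma tv_lift_le {Θ X : Type*} [Fintype Θ] [Fintype X] (x : Θ → X → ℝ)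
    (hx : ∀ θ, IsProbVec (x θ)) (ρ : Θ → ℝ) (hρ : IsProbVec ρ) (θ : Θ) :
    tv (liftSCF x ρ) (x θ) ≤ 1 - ρ θ := by
  classical
  have habs : ∀ θ', ∑ a, |x θ' a - x θ a| ≤ if θ' = θ then 0 else 2 := by
    intro θ'
    by_cases h : θ' = θ
    · simp [h]
    · rw [if_neg h]
      have e1 : ∑ a, |x θ' a| = 1 := by
        rw [Finset.sum_congr rfl fun a _ => abs_of_nonneg ((hx θ').1 a), (hx θ').2]
      have e2 : ∑ a, |x θ a| = 1 := by
        rw [Finset.sum_congr rfl fun a _ => abs_of_nonneg ((hx θ).1 a), (hx θ).2]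
      calc ∑ a, |x θ' a - x θ a| ≤ ∑ a, (|x θ' a| + |x θ a|) := by
            apply Finset.sum_le_sum
            intro a _
            rw [sub_eq_add_neg]
            exact le_trans (abs_add_le _ _) (by rw [abs_neg])
        _ = 2 := by rw [Finset.sum_add_distrib, e1, e2]; norm_num
  have hmain : ∑ a, |liftSCF x ρ a - x θ a| ≤ 2 - 2 * ρ θ := by
    have hdiff : ∀ a, liftSCF x ρ a - x θ a = ∑ θ', ρ θ' * (x θ' a - x θ a) := by
      intro a
      have : ∑ θ', ρ θ' * (x θ' a - x θ a) = (∑ θ', ρ θ' * x θ' a) - x θ a := by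
        simp_rw [mul_sub]
        rw [Finset.sum_sub_distrib, ← Finset.sum_mul, hρ.2, one_mul]
      rw [this]
      rfl
    calc ∑ a, |liftSCF x ρ a - x θ a| = ∑ a, |∑ θ', ρ θ' * (x θ' a - x θ a)| := by
          simp_rw [hdiff]
      _ ≤ ∑ a, ∑ θ', |ρ θ' * (x θ' a - x θ a)| :=
          Finset.sum_le_sum fun a _ => Finset.abs_sum_le_sum_abs _ _
      _ = ∑ θ', ∑ a, ρ θ' * |x θ' a - x θ a| := by
          simp_rw [abs_mul]
          rw [Finset.sum_comm]
          apply Finset.sum_congr rfl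
          intro θ' _
          exact Finset.sum_congr rfl fun a _ => by rw [abs_of_nonneg (hρ.1 θ')]
      _ = ∑ θ', ρ θ' * ∑ a, |x θ' a - x θ a| := by
          simp_rw [← Finset.mul_sum]
      _ ≤ ∑ θ', ρ θ' * (if θ' = θ then 0 else 2) :=
          Finset.sum_le_sum fun θ' _ => mul_le_mul_of_nonneg_left (habs θ') (hρ.1 θ')
      _ = 2 - 2 * ρ θ := by
          have hsplit : ∀ θ', ρ θ' * (if θ' = θ then 0 else 2)
              = 2 * ρ θ' - (if θ' = θ then 2 * ρ θ' else 0) := by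
            intro θ'; split <;> ring
          simp_rw [hsplit]
          rw [Finset.sum_sub_distrib, ← Finset.mul_sum, hρ.2,
            Finset.sum_ite_eq' univ θ (fun θ' => 2 * ρ θ')]
          simp
  show (∑ a, |liftSCF x ρ a - x θ a|) / 2 ≤ 1 - ρ θ
  linarith

/-- Optimal kernel coupling and approximate distributional
robustness. For the cost `c(θ,θ') = −ū(x(θ'),θ)` there is a kernel `r` from
`π` to `q` inducing a `c`-optimal coupling, keeping the mass fixed up to
`(|Θ| − 1)·‖q − π‖`, and with expected decision error bounded accordingly. -/
theorem optimal_kernel_coupling_bound {Θ X : Type*} [Fintype Θ] [Fintype X]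
    [Nonempty Θ] [Nonempty X]
    (u : X × Θ → ℝ) (x : Θ → X → ℝ) (hx : ∀ θ, IsProbVec (x θ))
    (hcm : CyclMonoSCF u x)
    (q π : Θ → ℝ) (hq : IsProbVec q) (hπ : IsProbVec π) :
    ∃ r : Θ → Θ → ℝ, (∀ θ, IsProbVec (r θ)) ∧
      (∀ θ', ∑ θ, π θ * r θ θ' = q θ') ∧
      IsOptimalCoupling (fun θ θ' => -ubar u (x θ') θ)
        (fun θ θ' => π θ * r θ θ') π q ∧
      1 - ∑ θ, π θ * r θ θ ≤ ((Fintype.card Θ : ℝ) - 1) * tv q π ∧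
      ∑ θ, π θ * tv (liftSCF x (r θ)) (x θ) ≤
        ((Fintype.card Θ : ℝ) - 1) * tv q π := by
  classical
  obtain ⟨γ, hopt, hmax⟩ :=
    exists_opt_maxdiag (fun θ θ' => -ubar u (x θ') θ) π q hπ hq
  set R : Θ → Θ → Prop := fun θ θ' => θ ≠ θ' ∧ 0 < γ θ θ' with hR
  have hirr : ∀ a, ¬ R a a := fun a h => h.1 rfl
  have hnc : ∀ (k : ℕ) (θs : Fin (k+2) → Θ), Function.Injective θs →
      ¬ ∀ j, R (θs j) (θs (j+1)) := by
    intro k θs hinjθ h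
    exact no_cycle u x hcm π q γ hopt hmax k θs hinjθ (fun j => (h j).2)
  obtain ⟨e, he⟩ := exists_topo_order R hirr hnc
  have hfwd : ∀ i j : Fin (Fintype.card Θ), e i ≠ e j → 0 < γ (e i) (e j) → i < j :=
    fun i j h1 h2 => he i j ⟨h1, h2⟩
  have hD : 1 - ∑ θ, γ θ θ ≤ ((Fintype.card Θ : ℝ) - 1) * tv q π :=
    offdiag_bound γ π q hopt.1 hq.2 hπ.2 (Fintype.card Θ) rfl e hfwd
  set r : Θ → Θ → ℝ :=
    fun θ θ' => if 0 < π θ then γ θ θ' / π θ else (if θ' = θ then 1 else 0) with hr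
  have hπ0 : ∀ θ, ¬ 0 < π θ → π θ = 0 := fun θ h => le_antisymm (not_lt.mp h) (hπ.1 θ)
  have hγ0 : ∀ θ, π θ = 0 → ∀ θ', γ θ θ' = 0 := by
    intro θ h θ'
    have hsum : ∑ θ', γ θ θ' = 0 := by rw [hopt.1.2.1 θ, h]
    have := (Finset.sum_eq_zero_iff_of_nonneg (fun θ' _ => hopt.1.1 θ θ')).mp hsum
    exact this θ' (mem_univ θ')
  have hpoint : ∀ θ θ', π θ * r θ θ' = γ θ θ' := by
    intro θ θ'
    by_cases h : 0 < π θ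
    · simp only [hr, if_pos h]
      rw [mul_comm, div_mul_cancel₀ _ (ne_of_gt h)]
    · have h0 := hπ0 θ h
      simp only [hr, if_neg h, h0, zero_mul]
      exact (hγ0 θ h0 θ').symm
  have hγr : (fun θ θ' => π θ * r θ θ') = γ :=
    funext fun θ => funext fun θ' => hpoint θ θ'
  have hprob : ∀ θ, IsProbVec (r θ) := by
    intro θ
    by_cases h : 0 < π θ
    · constructor
      · intro θ'
        simp only [hr, if_pos h]
        exact div_nonneg (hopt.1.1 θ θ') (le_of_lt h)
      · simp only [hr, if_pos h]
        rw [← Finset.sum_div, hopt.1.2.1 θ, div_self (ne_of_gt h)]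
    · constructor
      · intro θ'
        simp only [hr, if_neg h]
        split
        · exact zero_le_one
        · exact le_refl 0
      · simp only [hr, if_neg h]
        simp
  refine ⟨r, hprob, ?_, ?_, ?_, ?_⟩
  · intro θ'
    calc ∑ θ, π θ * r θ θ' = ∑ θ, γ θ θ' :=
        Finset.sum_congr rfl fun θ _ => hpoint θ θ'
      _ = q θ' := hopt.1.2.2 θ'
  · rw [hγr]
    exact hopt
  · have : ∑ θ, π θ * r θ θ = ∑ θ, γ θ θ :=
      Finset.sum_congr rfl fun θ _ => hpoint θ θ
    rw [this]
    exact hD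
  · calc ∑ θ, π θ * tv (liftSCF x (r θ)) (x θ)
        ≤ ∑ θ, π θ * (1 - r θ θ) :=
          Finset.sum_le_sum fun θ _ =>
            mul_le_mul_of_nonneg_left (tv_lift_le x hx (r θ) (hprob θ) θ) (hπ.1 θ)
      _ = (∑ θ, π θ) - ∑ θ, π θ * r θ θ := by
          simp_rw [mul_sub, mul_one]
          rw [Finset.sum_sub_distrib]
      _ = 1 - ∑ θ, γ θ θ := by
          rw [hπ.2]
          congr 1
          exact Finset.sum_congr rfl fun θ _ => hpoint θ θ
      _ ≤ ((Fintype.card Θ : ℝ) - 1) * tv q π := hD
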